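/- Let T be finite and for each t ∈ T let pᵗ ∈ ℝⁿ and let Nᵗ be a finite set of points, one on each edge of the polyhedron Pᵗ emanating from the vertex pᵗ, so that the cone pᵗ + cone{q − pᵗ : q ∈ Nᵗ} contains Pᵗ. If (α, β) satisfies α·q ≥ β for all q ∈ ∪_t ({pᵗ} ∪ Nᵗ) and additionally α·pᵗ = β for all t ∈ T, then α·x ≥ β is valid for cl conv(∪_t Pᵗ). -/

import Mathlib

open Pointwise

noncomputable section

/-- Dot product on `ℝⁿ`. -/
def dot {n : ℕ} (a x : Fin n → ℝ) : ℝ := ∑ i, a i * x i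

/-- Conical (nonnegative) hull of a set of rays. -/
def coneHull {n : ℕ} (R : Set (Fin n → ℝ)) : Set (Fin n → ℝ) :=
  {y | ∃ (s : Finset (Fin n → ℝ)) (c : (Fin n → ℝ) → ℝ),
      ↑s ⊆ R ∧ (∀ r ∈ s, 0 ≤ c r) ∧ y = ∑ r ∈ s, c r • r}

/-- The point-ray hull `conv(P) + cone(R)` (Minkowski sum). -/
def pointRayHull {n : ℕ} (P R : Set (Fin n → ℝ)) : Set (Fin n → ℝ) :=
  convexHull ℝ P + coneHull R

/-- A polyhedron: intersection of finitely many halfspaces. -/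
def IsPolyhedron {n : ℕ} (S : Set (Fin n → ℝ)) : Prop :=
  ∃ (m : ℕ) (A : Fin m → (Fin n → ℝ)) (b : Fin m → ℝ),
    S = {x | ∀ i, b i ≤ dot (A i) x}

/-- Recession cone of a set. -/
def recessionCone {n : ℕ} (S : Set (Fin n → ℝ)) : Set (Fin n → ℝ) :=
  {r | ∀ x ∈ S, ∀ t : ℝ, 0 ≤ t → x + t • r ∈ S}

/-- A set is pointed if its recession cone contains no line. -/
def IsPointed {n : ℕ} (S : Set (Fin n → ℝ)) : Prop :=
  ∀ r ∈ recessionCone S, -r ∈ recessionCone S → r = 0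

/-- `x` generates an extreme ray of the cone `C`: it is a nonzero element of `C` that
cannot be written as a sum of two elements of `C` not both parallel to it. -/
def IsExtremeRay {V : Type*} [AddCommGroup V] [Module ℝ V] (C : Set V) (x : V) : Prop :=
  x ∈ C ∧ x ≠ 0 ∧ ∀ y ∈ C, ∀ z ∈ C, x = y + z →
    (∃ t : ℝ, 0 ≤ t ∧ y = t • x) ∧ (∃ t : ℝ, 0 ≤ t ∧ z = t • x)

/-- Affine dimension of a subset of `ℝⁿ`. -/
def affDim {n : ℕ} (S : Set (Fin n → ℝ)) : ℕ :=
  Module.finrank ℝ (affineSpan ℝ S).direction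

open Matrix

/-! The halfspace `{x | β ≤ α·x}` is closed and convex, so it suffices that it contains each
`Pᵗ`. Since `α·pᵗ = β` and `α·q ≥ β` on `Nᵗ`, the functional `α` is nonnegative on every edge
direction `q − pᵗ`, hence on their conic hull, so `α·x ≥ β` on `pᵗ + cone{q − pᵗ : q ∈ Nᵗ} ⊇ Pᵗ`. -/

section

variable {n : ℕ}

lemma dot_eq_dotProduct (a x : Fin n → ℝ) : dot a x = a ⬝ᵥ x := rfl

lemma isLinearMap_dot (a : Fin n → ℝ) : IsLinearMap ℝ (dot a) :=
  ⟨dotProduct_add a, fun c x => dotProduct_smul c a x⟩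

lemma continuous_dot (a : Fin n → ℝ) : Continuous (dot a) :=
  continuous_const.dotProduct continuous_id

lemma dot_nonneg_of_mem_coneHull {a : Fin n → ℝ} {R : Set (Fin n → ℝ)}
    (hR : ∀ r ∈ R, 0 ≤ dot a r) {y : Fin n → ℝ} (hy : y ∈ coneHull R) : 0 ≤ dot a y := by
  obtain ⟨s, c, hsR, hc, rfl⟩ := hy
  rw [dot_eq_dotProduct, dotProduct_sum]
  refine Finset.sum_nonneg fun r hr => ?_
  rw [dotProduct_smul]
  exact smul_nonneg (hc r hr) (hR r (hsR hr))

lemma le_dot_of_mem_singleton_add_coneHull {a p : Fin n → ℝ} {β : ℝ} {N : Set (Fin n → ℝ)}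
    (hN : ∀ q ∈ N, β ≤ dot a q) (hp : dot a p = β) {x : Fin n → ℝ}
    (hx : x ∈ {p} + coneHull ((fun q => q - p) '' N)) : β ≤ dot a x := by
  rw [Set.singleton_add] at hx
  obtain ⟨y, hy, rfl⟩ := hx
  have hdir : ∀ r ∈ (fun q => q - p) '' N, 0 ≤ dot a r := by
    rintro _ ⟨q, hq, rfl⟩
    rw [dot_eq_dotProduct, dotProduct_sub, ← dot_eq_dotProduct, ← dot_eq_dotProduct, hp]
    linarith [hN q hq]
  rw [dot_eq_dotProduct, dotProduct_add, ← dot_eq_dotProduct, ← dot_eq_dotProduct, hp]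
  linarith [dot_nonneg_of_mem_coneHull hdir hy]

lemma closure_convexHull_subset_halfSpace {a : Fin n → ℝ} {β : ℝ} {S : Set (Fin n → ℝ)}
    (hS : S ⊆ {x | β ≤ dot a x}) : closure (convexHull ℝ S) ⊆ {x | β ≤ dot a x} :=
  closure_minimal (convexHull_min hS (convex_halfSpace_ge (isLinearMap_dot a) β))
    (isClosed_le continuous_const (continuous_dot a))

end

theorem stmt_13_general {n : ℕ} {T : Type*}
    (Pt : T → Set (Fin n → ℝ))
    (p : T → (Fin n → ℝ))
    (N : T → Set (Fin n → ℝ))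
    (hcone : ∀ t, Pt t ⊆ {p t} + coneHull ((fun q => q - p t) '' N t))
    (α : Fin n → ℝ) (β : ℝ)
    (hq : ∀ t, ∀ q ∈ insert (p t) (N t), β ≤ dot α q)
    (hpt : ∀ t, dot α (p t) = β) :
    ∀ x ∈ closure (convexHull ℝ (⋃ t, Pt t)), β ≤ dot α x := by
  refine closure_convexHull_subset_halfSpace (Set.iUnion_subset fun t x hx => ?_)
  exact le_dot_of_mem_singleton_add_coneHull (fun q hqN => hq t q (Set.mem_insert_of_mem _ hqN))
    (hpt t) (hcone t hx)

/-- For each term let `Nᵗ ⊆ Pᵗ` be points on the edges of `Pᵗ` at its vertex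
`pᵗ`, generating the tangent cone: `Pᵗ ⊆ pᵗ + cone{q − pᵗ : q ∈ Nᵗ}`. If `(α, β)` satisfies
`α·q ≥ β` for all `q ∈ ∪ₜ ({pᵗ} ∪ Nᵗ)` and moreover `α·pᵗ = β` for all `t`, then `α·x ≥ β` is
valid for `cl conv(∪ₜ Pᵗ)`. -/
theorem stmt_13 {n : ℕ} {T : Type*} [Fintype T]
    (Pt : T → Set (Fin n → ℝ)) (hpoly : ∀ t, IsPolyhedron (Pt t))
    (hpointed : ∀ t, IsPointed (Pt t))
    (p : T → (Fin n → ℝ)) (hvert : ∀ t, p t ∈ Set.extremePoints ℝ (Pt t))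
    (N : T → Set (Fin n → ℝ)) (hNfin : ∀ t, (N t).Finite)
    (hNsub : ∀ t, N t ⊆ Pt t)
    (hcone : ∀ t, Pt t ⊆ {p t} + coneHull ((fun q => q - p t) '' N t))
    (α : Fin n → ℝ) (β : ℝ)
    (hq : ∀ t, ∀ q ∈ insert (p t) (N t), β ≤ dot α q)
    (hpt : ∀ t, dot α (p t) = β) :
    ∀ x ∈ closure (convexHull ℝ (⋃ t, Pt t)), β ≤ dot α x :=
  stmt_13_general Pt p N hcone α β hq hpt
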